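/- Under the substitution setup (y = (cz+1)/z with a₀(c) ≠ 0, b_i(z) = (−1)^i a_i((cz+1)/z) z^{ℓ+2n−2i}, ℓ = msindex(f) > 0): if gcd(a₀,…,a_n) = 1 in k(t)[y], then gcd(b₀,…,b_n) = 1 in k(t)[z]. -/
import Mathlib

open Polynomial

/-- `bpoly n ℓ c a i` is the polynomial `b_i(z) = (-1)^i a_i((cz+1)/z) z^{ℓ+2n-2i}`. -/
noncomputable def bpoly {k : Type*} [Field k] (n ℓ : ℕ) (c : k)
    (a : Fin (n + 1) → Polynomial (RatFunc k)) (i : Fin (n + 1)) : Polynomial (RatFunc k) :=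
  Polynomial.C ((-1 : RatFunc k) ^ (i : ℕ)) *
    ∑ j ∈ Finset.range ((a i).natDegree + 1),
      Polynomial.C ((a i).coeff j) *
        (Polynomial.C (RatFunc.C c) * Polynomial.X + 1) ^ j *
        Polynomial.X ^ (ℓ + 2 * n - 2 * (i : ℕ) - j)

theorem stmt_12 {k : Type*} [Field k] [IsAlgClosed k] [CharZero k]
    (n ℓ : ℕ) (c : k) (a : Fin (n + 1) → Polynomial (RatFunc k))
    (han : a (Fin.last n) ≠ 0) (hl : 0 < ℓ)
    (hldef : (ℓ : ℤ) = Finset.univ.sup' Finset.univ_nonempty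
        (fun i : Fin (n + 1) => ((a i).natDegree : ℤ) - 2 * ((n : ℤ) - (i : ℕ))))
    (hc : (a 0).eval (RatFunc.C c) ≠ 0)
    (hgcd : ∀ d : Polynomial (RatFunc k), (∀ i, d ∣ a i) → IsUnit d) :
    ∀ d : Polynomial (RatFunc k), (∀ i, d ∣ bpoly n ℓ c a i) → IsUnit d := by
  classical
  intro d hd
  by_contra hdu
  -- degree bounds
  have hdegle : ∀ i : Fin (n + 1), (a i).natDegree ≤ ℓ + 2 * n - 2 * (i : ℕ) := by
    intro i
    have h1 := Finset.le_sup' (fun i : Fin (n + 1) =>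
      ((a i).natDegree : ℤ) - 2 * ((n : ℤ) - (i : ℕ))) (Finset.mem_univ i)
    rw [← hldef] at h1
    have h2 : (i : ℕ) ≤ n := Fin.is_le i
    omega
  -- an index attaining the sup
  obtain ⟨i₀, -, hi₀⟩ := Finset.exists_mem_eq_sup' (Finset.univ_nonempty)
      (fun i : Fin (n + 1) => ((a i).natDegree : ℤ) - 2 * ((n : ℤ) - (i : ℕ)))
  rw [← hldef] at hi₀
  have hile : (i₀ : ℕ) ≤ n := Fin.is_le i₀
  have hdeg₀ : (a i₀).natDegree = ℓ + 2 * n - 2 * (i₀ : ℕ) := by omega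
  have hane : a i₀ ≠ 0 := by
    intro h
    rw [h] at hdeg₀
    simp at hdeg₀
    omega
  -- constant term of b_{i₀} is nonzero
  have hb0 : (bpoly n ℓ c a i₀).coeff 0 = (-1 : RatFunc k) ^ (i₀ : ℕ) * (a i₀).leadingCoeff := by
    rw [coeff_zero_eq_eval_zero]
    unfold bpoly
    rw [eval_mul, eval_C, eval_finset_sum]
    congr 1
    rw [Finset.sum_eq_single (a i₀).natDegree]
    · simp [hdeg₀, leadingCoeff]
    · intro j hj hjne
      have hjlt : j < (a i₀).natDegree := by
        rw [Finset.mem_range] at hj; omega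
      have : ℓ + 2 * n - 2 * (i₀ : ℕ) - j ≠ 0 := by omega
      simp [this, zero_pow]
    · intro h
      exact absurd (Finset.self_mem_range_succ _) h
  have hb0ne : (bpoly n ℓ c a i₀).coeff 0 ≠ 0 := by
    rw [hb0]
    exact mul_ne_zero (pow_ne_zero _ (by norm_num)) (leadingCoeff_ne_zero.mpr hane)
  -- d ≠ 0
  have hdne : d ≠ 0 := by
    intro h
    rw [h] at hd
    have := hd i₀
    rw [zero_dvd_iff] at this
    rw [this] at hb0ne
    simp at hb0ne
  -- pass to the algebraic closure
  set F := AlgebraicClosure (RatFunc k)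
  have hφinj : Function.Injective (algebraMap (RatFunc k) F) :=
    (algebraMap (RatFunc k) F).injective
  have hdmap : (d.map (algebraMap (RatFunc k) F)).degree ≠ 0 := by
    rw [degree_map_eq_of_injective hφinj]
    intro h
    exact hdu (isUnit_iff_degree_eq_zero.mpr h)
  obtain ⟨η, hη⟩ := IsAlgClosed.exists_root _ hdmap
  -- η is a root of every (mapped) b_i
  have hroot : ∀ i, Polynomial.aeval η (bpoly n ℓ c a i) = 0 := by
    intro i
    obtain ⟨e, he⟩ := hd i
    have : Polynomial.aeval η d = 0 := by
      rw [aeval_def, ← eval_map]; exact hη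
    rw [he, map_mul, this, zero_mul]
  -- evaluate the formula
  have hval : ∀ i : Fin (n + 1),
      ∑ j ∈ Finset.range ((a i).natDegree + 1),
        algebraMap (RatFunc k) F ((a i).coeff j) *
          (algebraMap (RatFunc k) F (RatFunc.C c) * η + 1) ^ j *
          η ^ (ℓ + 2 * n - 2 * (i : ℕ) - j) = 0 := by
    intro i
    have h := hroot i
    unfold bpoly at h
    simp only [map_mul, map_sum, map_pow, map_add, map_one, aeval_C, aeval_X] at h
    rcases mul_eq_zero.mp h with h' | h'
    · exact absurd h' (pow_ne_zero _ (by
        simp only [ne_eq, map_neg, map_one]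
        norm_num))
    · exact h'
  by_cases hη0 : η = 0
  · -- then b_{i₀} has zero constant term, contradiction
    have h := hval i₀
    rw [hη0, Finset.sum_eq_single (a i₀).natDegree] at h
    · have hz : ℓ + 2 * n - 2 * (i₀ : ℕ) - (a i₀).natDegree = 0 := by omega
      rw [hz] at h
      simp only [pow_zero, mul_one, mul_zero, zero_add, one_pow] at h
      have hc0 : (a i₀).coeff (a i₀).natDegree = 0 := by
        apply hφinj
        rw [h, map_zero]
      exact (leadingCoeff_ne_zero.mpr hane) hc0
    · intro j hj hjne
      have hjlt : j < (a i₀).natDegree := by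
        rw [Finset.mem_range] at hj; omega
      have : ℓ + 2 * n - 2 * (i₀ : ℕ) - j ≠ 0 := by omega
      simp [this, zero_pow]
    · intro h'
      exact absurd (Finset.self_mem_range_succ _) h'
  · -- common root of all a_i
    set u : F := algebraMap (RatFunc k) F (RatFunc.C c) * η + 1 with hu
    set y₀ : F := u * η⁻¹ with hy₀
    have haroot : ∀ i : Fin (n + 1), Polynomial.aeval y₀ (a i) = 0 := by
      intro i
      have hm : ∀ j ∈ Finset.range ((a i).natDegree + 1),
          algebraMap (RatFunc k) F ((a i).coeff j) * y₀ ^ j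
            * η ^ (ℓ + 2 * n - 2 * (i : ℕ)) =
          algebraMap (RatFunc k) F ((a i).coeff j) * u ^ j
            * η ^ (ℓ + 2 * n - 2 * (i : ℕ) - j) := by
        intro j hj
        have hjle : j ≤ ℓ + 2 * n - 2 * (i : ℕ) := by
          rw [Finset.mem_range] at hj
          have := hdegle i
          omega
        rw [hy₀, mul_pow, pow_sub₀ η hη0 hjle, inv_pow]
        ring
      have h2 : Polynomial.aeval y₀ (a i) * η ^ (ℓ + 2 * n - 2 * (i : ℕ)) = 0 := by
        rw [aeval_def, eval₂_eq_sum_range, Finset.sum_mul, Finset.sum_congr rfl hm]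
        exact hval i
      rcases mul_eq_zero.mp h2 with h' | h'
      · exact h'
      · exact absurd h' (pow_ne_zero _ hη0)
    -- derive contradiction with hgcd via principality
    set I : Ideal (Polynomial (RatFunc k)) := Ideal.span (Set.range a) with hI
    obtain ⟨g, hg⟩ := (inferInstance : Submodule.IsPrincipal I).principal
    have hg' : I = Ideal.span {g} := hg
    have hgdvd : ∀ i, g ∣ a i := by
      intro i
      rw [← Ideal.mem_span_singleton, ← hg']
      exact Ideal.subset_span (Set.mem_range_self i)
    have hgu : IsUnit g := hgcd g hgdvd
    have hone : (1 : Polynomial (RatFunc k)) ∈ I := by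
      rw [hg', Ideal.span_singleton_eq_top.mpr hgu]
      trivial
    rw [hI] at hone
    obtain ⟨co, hco⟩ := Ideal.mem_span_range_iff_exists_fun.mp hone
    have h1 := congrArg (Polynomial.aeval y₀) hco
    simp only [map_sum, map_mul, map_one] at h1
    rw [Finset.sum_congr rfl (fun i _ => by rw [haroot i, mul_zero]),
      Finset.sum_const_zero] at h1
    exact one_ne_zero h1.symm
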